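/- arXiv:1202.0140 — 2 statements merged into one kernel-verified Lean document; each statement's English description precedes it below -/
import Mathlib

section
/- Let f₀(x) = x/2 and f₁(x) = x/2 + 1/2 on [0,1], let F¹ = {f₀, f₁}, F² = {f₀}, F³ = {f₁}, with the translation vector of F² identified with a₀ of F¹ and that of F³ identified with a₁ of F¹ (so the translation data is a ∈ ℝ²). Then there exists a code tree ω over {F¹, F², F³} such that at the original parameter the attractor is A^ω = {0} ∪ {1/n : n ∈ ℕ}, the natural pressure p^ω(α) exists for all α ≥ 0 and has its unique zero at α = 1/2, yet for every a ∈ ℝ² the attractor A_a^ω is countable and hence dim_H(A_a^ω) = dim_P(A_a^ω) = 0; in particular the Hausdorff and packing dimensions differ from the zero of the pressure for every translation vector. -/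
/-!
The code tree follows the binary expansions of the numbers `1 / n`. Its nodes of level `k`
are the distinct values `(2 ^ k - 1) / n`, i.e. the `k`-digit prefixes of these expansions,
and the label of a node records which of its two binary children are again such prefixes.
There are between `2 ^ (k / 2)` and `3 · 2 ^ (k / 2)` of them (with `M = 2 ^ k - 1`, the
quotients by `n ≤ √M` are distinct and the others are at most `√M`), which gives the pressure
`log 2 / 2 - α log 2`. A path is a nested sequence of prefixes, and these are exactly the
prefix sequences of a single `1 / n` (with `n = 0` for the zero path): so there are countably
many paths, whatever the translations are, and at `a = (0, 1/2)` the path of `1 / n` is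
mapped to `1 / n`.
-/

open MeasureTheory Filter Set Topology
open scoped ENNReal Topology

noncomputable section

namespace CodeTreeFractal

variable {Λ : Type*}

/-- The word formed by the first `k` letters of an infinite path `i`. -/
def word (i : ℕ → ℕ) (k : ℕ) : List ℕ := (List.range k).map i

/-- `w` belongs to the tree `Σ_*^ω` determined by the branching numbers `Mlam`
and the code tree `ω`. (Letters are indexed from `0`.) -/
def IsNode (Mlam : Λ → ℕ) (ω : List ℕ → Λ) (w : List ℕ) : Prop :=
  ∀ j : Fin w.length, w.get j < Mlam (ω (w.take j))

/-- `i` is an infinite path of `Σ^ω`. -/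
def IsPath (Mlam : Λ → ℕ) (ω : List ℕ → Λ) (i : ℕ → ℕ) : Prop :=
  ∀ k, i k < Mlam (ω (word i k))

/-- The cylinder of infinite sequences beginning with the word `w`. -/
def cylinder (w : List ℕ) : Set (ℕ → ℕ) := {i | word i w.length = w}

/-- The set `Σ^ω` of infinite paths. -/
def pathSet (Mlam : Λ → ℕ) (ω : List ℕ → Λ) : Set (ℕ → ℕ) := {i | IsPath Mlam ω i}

/-- The product of the linear parts (contraction coefficients on `ℝ`) along a word. -/
def prodc (r : Λ → ℕ → ℝ) : (List ℕ → Λ) → List ℕ → ℝ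
  | _, [] => 1
  | ω, l :: w => r (ω []) l * prodc r (fun u => ω (l :: u)) w

/-- The singular value function on `ℝ` : `Φ^α(T) = |T|^α`. -/
def Phi1 (c : ℝ) (α : ℝ) : ℝ := |c| ^ α

/-- The sum `S^ω(k, α)` over the level-`k` nodes. -/
def S1 (Mlam : Λ → ℕ) (r : Λ → ℕ → ℝ) (ω : List ℕ → Λ) (k : ℕ) (α : ℝ) : ℝ :=
  ∑' w : {w : List ℕ // w.length = k ∧ IsNode Mlam ω w}, Phi1 (prodc r ω w.1) α

/-- The lower pressure `p_inf^ω(α)`. -/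
def pinf1 (Mlam : Λ → ℕ) (r : Λ → ℕ → ℝ) (ω : List ℕ → Λ) (α : ℝ) : ℝ :=
  liminf (fun k : ℕ => Real.log (S1 Mlam r ω k α) / k) atTop

/-- The upper pressure `p_sup^ω(α)`. -/
def psup1 (Mlam : Λ → ℕ) (r : Λ → ℕ → ℝ) (ω : List ℕ → Λ) (α : ℝ) : ℝ :=
  limsup (fun k : ℕ => Real.log (S1 Mlam r ω k α) / k) atTop

/-- The natural projection `Z_a^ω` on `ℝ`. -/
def Z1 (r : Λ → ℕ → ℝ) (tr : Λ → ℕ → ℝ) (ω : List ℕ → Λ) (i : ℕ → ℕ) : ℝ :=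
  ∑' k : ℕ, prodc r ω (word i k) * tr (ω (word i k)) (i k)

/-- The code tree fractal `A_a^ω ⊆ ℝ`. -/
def attractor1 (Mlam : Λ → ℕ) (r : Λ → ℕ → ℝ) (tr : Λ → ℕ → ℝ)
    (ω : List ℕ → Λ) : Set ℝ :=
  {x | ∃ i : ℕ → ℕ, IsPath Mlam ω i ∧ Z1 r tr ω i = x}

/-- The stage-`j` covering sums defining the natural measure `M_j^α(Σ^ω)`. -/
def natStage1 (Mlam : Λ → ℕ) (r : Λ → ℕ → ℝ) (ω : List ℕ → Λ)
    (α : ℝ) (j : ℕ) : ℝ≥0∞ :=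
  ⨅ (J : Set (List ℕ)) (_ : ∀ w ∈ J, IsNode Mlam ω w ∧ j ≤ w.length)
    (_ : pathSet Mlam ω ⊆ ⋃ w ∈ J, cylinder w),
    ∑' w : J, ENNReal.ofReal (Phi1 (prodc r ω w.1) α)

/-- The natural measure `M^α(Σ^ω)`. -/
def natMeasure1 (Mlam : Λ → ℕ) (r : Λ → ℕ → ℝ) (ω : List ℕ → Λ) (α : ℝ) : ℝ≥0∞ :=
  ⨆ j : ℕ, natStage1 Mlam r ω α j

/-- The affinity dimension `d^ω = inf {α ≥ 0 : M^α(Σ^ω) = 0}`. -/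
def affinityDim1 (Mlam : Λ → ℕ) (r : Λ → ℕ → ℝ) (ω : List ℕ → Λ) : ℝ :=
  sInf {α : ℝ | 0 ≤ α ∧ natMeasure1 Mlam r ω α = 0}

/-- The `ε`-covering number of a subset of `ℝ` (by closed balls of radius `ε`). -/
def covNum (A' : Set ℝ) (ε : ℝ) : ℝ≥0∞ :=
  ⨅ (s : Finset ℝ) (_ : A' ⊆ ⋃ c ∈ s, Metric.closedBall c ε), (s.card : ℝ≥0∞)

/-- The upper box counting (Minkowski) dimension of a subset of `ℝ`. -/
def uboxDim (A' : Set ℝ) : ℝ :=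
  limsup (fun ε : ℝ => Real.log (covNum A' ε).toReal / -Real.log ε)
    (nhdsWithin 0 (Set.Ioi 0))

/-- The packing dimension of a subset of `ℝ`, via the standard characterization
as the infimum over countable covers (by bounded sets) of the supremum of the
upper box dimensions of the pieces. -/
def packingDim (A' : Set ℝ) : ℝ :=
  sInf {s : ℝ | ∃ Es : ℕ → Set ℝ, (∀ n, Bornology.IsBounded (Es n)) ∧
    A' ⊆ ⋃ n, Es n ∧ ∀ n, uboxDim (Es n) ≤ s}

section CodeTrees

variable {Λ : Type*}

theorem word_succ (i : ℕ → ℕ) (k : ℕ) : word i (k + 1) = word i k ++ [i k] := by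
  simp [word, List.range_succ]

theorem length_word (i : ℕ → ℕ) (k : ℕ) : (word i k).length = k := by simp [word]

theorem eq_of_forall_word_eq {i j : ℕ → ℕ} (h : ∀ k, word i k = word j k) : i = j := by
  funext k
  have hk := h (k + 1)
  rw [word_succ, word_succ, h k] at hk
  exact List.singleton_injective (List.append_cancel_left hk)

theorem isNode_nil (Mlam : Λ → ℕ) (ω : List ℕ → Λ) : IsNode Mlam ω [] :=
  fun j => j.elim0

theorem isNode_append {Mlam : Λ → ℕ} {ω : List ℕ → Λ} {w : List ℕ} {l : ℕ} :
    IsNode Mlam ω (w ++ [l]) ↔ IsNode Mlam ω w ∧ l < Mlam (ω w) := by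
  simp only [IsNode, List.get_eq_getElem, Fin.forall_iff, List.length_append,
    List.length_singleton]
  rw [Nat.forall_lt_succ_right']
  refine and_congr (forall₂_congr fun j hj => ?_) ?_
  · rw [List.getElem_append_left hj, List.take_append_of_le_length hj.le]
  · simp

theorem IsPath.isNode_word {Mlam : Λ → ℕ} {ω : List ℕ → Λ} {i : ℕ → ℕ}
    (hi : IsPath Mlam ω i) (k : ℕ) : IsNode Mlam ω (word i k) := by
  induction k with
  | zero => exact isNode_nil Mlam ω
  | succ k ih => rw [word_succ]; exact isNode_append.2 ⟨ih, hi k⟩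

theorem prodc_const_half (ω : List ℕ → Λ) (w : List ℕ) :
    prodc (fun _ _ => (1 : ℝ) / 2) ω w = (1 / 2 : ℝ) ^ w.length := by
  induction w generalizing ω with
  | nil => simp [prodc]
  | cons l w ih => rw [prodc, ih, List.length_cons, pow_succ']

end CodeTrees

section BinaryCodeTree

/-- Label `0` is `F¹ = {f₀, f₁}`, label `1` is `F² = {f₀}`, label `2` is `F³ = {f₁}`. -/
def branching (t : Fin 3) : ℕ := if t = 0 then 2 else 1

/-- The binary digit contributed by the letter `l` of the system with label `t`: the map
applied is `x ↦ x/2 + a (digit t l)`. -/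
def digit (t : Fin 3) (l : ℕ) : Fin 2 :=
  if t = 0 then (if l = 0 then 0 else 1) else if t = 1 then 0 else 1

def letterOfDigit (t : Fin 3) (b : ℕ) : ℕ := if t = 0 then b else 0

theorem letterOfDigit_digit {t : Fin 3} {l : ℕ} (hl : l < branching t) :
    letterOfDigit t (digit t l) = l := by
  unfold branching at hl
  unfold letterOfDigit digit
  fin_cases t
  · by_cases h : l = 0
    · simp [h]
    · simp [h] at hl ⊢; omega
  all_goals simp at hl ⊢; omega

variable (D : ℕ → Finset ℕ)

/-- `D k` is the set of values of the binary words of length `k` in a pruned binary tree. -/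
structure IsPrunedBinaryTree : Prop where
  zero : D 0 = {0}
  div_two_mem {k d : ℕ} : d ∈ D (k + 1) → d / 2 ∈ D k
  exists_child {k c : ℕ} : c ∈ D k → 2 * c ∈ D (k + 1) ∨ 2 * c + 1 ∈ D (k + 1)

/-- The label of a node of value `c` at level `k`, chosen so that its children are exactly
the elements of `D (k + 1)` among `2 c` and `2 c + 1`. -/
def childLabel (k c : ℕ) : Fin 3 :=
  if 2 * c ∈ D (k + 1) then (if 2 * c + 1 ∈ D (k + 1) then 0 else 1) else 2

def valueFrom : ℕ → ℕ → List ℕ → ℕ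
  | _, c, [] => c
  | k, c, l :: w => valueFrom (k + 1) (2 * c + digit (childLabel D k c) l) w

/-- The binary digits read along `w`, as a natural number. -/
def value (w : List ℕ) : ℕ := valueFrom D 0 0 w

def codeTree (w : List ℕ) : Fin 3 := childLabel D w.length (value D w)

def nodeOf : ℕ → ℕ → List ℕ
  | 0, _ => []
  | k + 1, d => nodeOf k (d / 2) ++ [letterOfDigit (codeTree D (nodeOf k (d / 2))) (d % 2)]

theorem value_append (w : List ℕ) (l : ℕ) :
    value D (w ++ [l]) = 2 * value D w + digit (codeTree D w) l := by
  suffices ∀ k c, valueFrom D k c (w ++ [l]) =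
      2 * valueFrom D k c w + digit (childLabel D (k + w.length) (valueFrom D k c w)) l by
    simpa [value, codeTree] using this 0 0
  induction w with
  | nil => simp [valueFrom]
  | cons l' w ih =>
    intro k c
    simpa only [List.cons_append, valueFrom, List.length_cons, ← add_assoc,
      add_right_comm k] using ih (k + 1) _

theorem value_append_div_two (w : List ℕ) (l : ℕ) : value D (w ++ [l]) / 2 = value D w := by
  have := (digit (codeTree D w) l).isLt
  rw [value_append]
  omega

theorem value_append_mod_two (w : List ℕ) (l : ℕ) :
    value D (w ++ [l]) % 2 = digit (codeTree D w) l := by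
  have := (digit (codeTree D w) l).isLt
  rw [value_append]
  omega

theorem length_nodeOf (k d : ℕ) : (nodeOf D k d).length = k := by
  induction k generalizing d with
  | zero => rfl
  | succ k ih => simp [nodeOf, ih]

variable {D}

theorem IsPrunedBinaryTree.two_mul_add_digit_mem (hD : IsPrunedBinaryTree D) {k c : ℕ}
    (hc : c ∈ D k) (l : ℕ) : 2 * c + digit (childLabel D k c) l ∈ D (k + 1) := by
  unfold childLabel
  by_cases h0 : 2 * c ∈ D (k + 1)
  · by_cases h1 : 2 * c + 1 ∈ D (k + 1)
    · by_cases hl : l = 0 <;> simp [h0, h1, hl, digit]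
    · simp [h0, h1, digit]
  · simpa [h0, digit] using (hD.exists_child hc).resolve_left h0

theorem digit_letterOfDigit {k d : ℕ} (hd : d ∈ D (k + 1)) :
    letterOfDigit (childLabel D k (d / 2)) (d % 2) < branching (childLabel D k (d / 2)) ∧
      (digit (childLabel D k (d / 2)) (letterOfDigit (childLabel D k (d / 2)) (d % 2)) : ℕ)
        = d % 2 := by
  unfold childLabel
  rcases Nat.mod_two_eq_zero_or_one d with h | h
  · have h0 : 2 * (d / 2) ∈ D (k + 1) := by rwa [show 2 * (d / 2) = d by omega]
    by_cases h1 : 2 * (d / 2) + 1 ∈ D (k + 1) <;>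
      simp [h, h0, h1, letterOfDigit, branching, digit]
  · have h1 : 2 * (d / 2) + 1 ∈ D (k + 1) := by rwa [show 2 * (d / 2) + 1 = d by omega]
    by_cases h0 : 2 * (d / 2) ∈ D (k + 1) <;>
      simp [h, h0, h1, letterOfDigit, branching, digit]

theorem IsPrunedBinaryTree.value_mem (hD : IsPrunedBinaryTree D) {w : List ℕ}
    (hw : IsNode branching (codeTree D) w) : value D w ∈ D w.length := by
  induction w using List.reverseRecOn with
  | nil => simp [hD.zero, value, valueFrom]
  | append_singleton w l ih =>
    rw [value_append, List.length_append, List.length_singleton]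
    exact hD.two_mul_add_digit_mem (ih (isNode_append.1 hw).1) l

theorem IsPrunedBinaryTree.value_nodeOf (hD : IsPrunedBinaryTree D) {k d : ℕ} (hd : d ∈ D k) :
    value D (nodeOf D k d) = d ∧ IsNode branching (codeTree D) (nodeOf D k d) := by
  induction k generalizing d with
  | zero =>
    rw [hD.zero, Finset.mem_singleton] at hd
    exact ⟨hd.symm, isNode_nil _ _⟩
  | succ k ih =>
    obtain ⟨hval, hnode⟩ := ih (hD.div_two_mem hd)
    have hlabel : codeTree D (nodeOf D k (d / 2)) = childLabel D k (d / 2) := by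
      rw [codeTree, hval, length_nodeOf]
    obtain ⟨hlt, hdigit⟩ := digit_letterOfDigit hd
    rw [nodeOf, value_append, isNode_append, hlabel, hval, hdigit]
    exact ⟨Nat.div_add_mod d 2, hnode, hlt⟩

theorem nodeOf_value {w : List ℕ} (hw : IsNode branching (codeTree D) w) :
    nodeOf D w.length (value D w) = w := by
  induction w using List.reverseRecOn with
  | nil => rfl
  | append_singleton w l ih =>
    obtain ⟨hw, hl⟩ := isNode_append.1 hw
    rw [List.length_append, List.length_singleton, nodeOf, value_append_div_two, ih hw,
      value_append_mod_two, letterOfDigit_digit hl]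

def IsPrunedBinaryTree.nodeEquiv (hD : IsPrunedBinaryTree D) (k : ℕ) :
    {w : List ℕ // w.length = k ∧ IsNode branching (codeTree D) w} ≃ D k where
  toFun w := ⟨value D w.1, by simpa [w.2.1] using hD.value_mem w.2.2⟩
  invFun d := ⟨nodeOf D k d, length_nodeOf D k d, (hD.value_nodeOf d.2).2⟩
  left_inv := by
    rintro ⟨w, rfl, hw⟩
    simp [nodeOf_value hw]
  right_inv d := by simp [(hD.value_nodeOf d.2).1]

/-- The path whose word of length `k` has value `c k`, for a sequence `c` of nested values. -/
def pathOf (D : ℕ → Finset ℕ) (c : ℕ → ℕ) (k : ℕ) : ℕ :=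
  letterOfDigit (codeTree D (nodeOf D k (c k))) (c (k + 1) % 2)

theorem word_pathOf {c : ℕ → ℕ} (hc : ∀ k, c (k + 1) / 2 = c k) (k : ℕ) :
    word (pathOf D c) k = nodeOf D k (c k) := by
  induction k with
  | zero => rfl
  | succ k ih => rw [word_succ, ih, nodeOf, hc, pathOf]

theorem IsPrunedBinaryTree.isPath_pathOf (hD : IsPrunedBinaryTree D) {c : ℕ → ℕ}
    (hmem : ∀ k, c k ∈ D k) (hc : ∀ k, c (k + 1) / 2 = c k) :
    IsPath branching (codeTree D) (pathOf D c) := by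
  intro k
  have hnode := (hD.value_nodeOf (hmem (k + 1))).2
  rw [← word_pathOf hc, word_succ] at hnode
  exact (isNode_append.1 hnode).2

theorem IsPrunedBinaryTree.value_word_pathOf (hD : IsPrunedBinaryTree D) {c : ℕ → ℕ}
    (hmem : ∀ k, c k ∈ D k) (hc : ∀ k, c (k + 1) / 2 = c k) (k : ℕ) :
    value D (word (pathOf D c) k) = c k := by
  rw [word_pathOf hc, (hD.value_nodeOf (hmem k)).1]

theorem IsPath.pathOf_value_word {i : ℕ → ℕ} (hi : IsPath branching (codeTree D) i) :
    pathOf D (fun k => value D (word i k)) = i := by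
  have hc k : value D (word i (k + 1)) / 2 = value D (word i k) := by
    rw [word_succ, value_append_div_two]
  refine eq_of_forall_word_eq fun k => ?_
  rw [word_pathOf hc]
  simpa only [length_word] using nodeOf_value (hi.isNode_word k)

end BinaryCodeTree

section Quotients

/-- The distinct values of `M / n`; the junk value `M / 0 = 0` is also `M / (M + 1)`. -/
def quotients (M : ℕ) : Finset ℕ := (Finset.range (M + 2)).image (M / ·)

theorem mem_quotients {M d : ℕ} : d ∈ quotients M ↔ ∃ n, M / n = d := by
  simp only [quotients, Finset.mem_image, Finset.mem_range]
  refine ⟨fun ⟨n, _, h⟩ => ⟨n, h⟩, fun ⟨n, h⟩ => ?_⟩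
  by_cases hn : n < M + 2
  · exact ⟨n, hn, h⟩
  · refine ⟨M + 1, by omega, ?_⟩
    rw [← h, Nat.div_eq_of_lt (by omega), Nat.div_eq_of_lt (by omega)]

theorem two_mul_add_one_div_div_two (M n : ℕ) : (2 * M + 1) / n / 2 = M / n := by
  rw [Nat.div_div_eq_div_mul]
  rcases Nat.eq_zero_or_pos n with rfl | hn
  · simp
  apply Nat.div_eq_of_lt_le
  · nlinarith [Nat.div_mul_le_self M n]
  · nlinarith [Nat.lt_div_mul_add (a := M) hn]

theorem div_lt_div_of_lt_of_mul_le {M n m : ℕ} (hn : 0 < n) (hnm : n < m) (hM : n * m ≤ M) :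
    M / m < M / n := by
  have hq : M / m * m ≤ M := Nat.div_mul_le_self M m
  have hnq : n ≤ M / m := (Nat.le_div_iff_mul_le (by omega)).2 hM
  apply Nat.lt_of_succ_le
  rw [Nat.le_div_iff_mul_le hn]
  nlinarith

theorem card_quotients_le (M : ℕ) : (quotients M).card ≤ 2 * Nat.sqrt M + 1 := by
  set s := Nat.sqrt M
  have hsub : quotients M ⊆ (Finset.Icc 1 s).image (M / ·) ∪ Finset.range (s + 1) := by
    intro d hd
    obtain ⟨n, rfl⟩ := mem_quotients.1 hd
    rcases Nat.eq_zero_or_pos n with rfl | hn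
    · simp
    by_cases hns : n ≤ s
    · exact Finset.mem_union_left _ (Finset.mem_image_of_mem _ (Finset.mem_Icc.2 ⟨hn, hns⟩))
    · refine Finset.mem_union_right _ (Finset.mem_range.2 ((Nat.div_lt_iff_lt_mul hn).2 ?_))
      have hsq : M < (s + 1) * (s + 1) := Nat.lt_succ_sqrt M
      have : (s + 1) * (s + 1) ≤ (s + 1) * n := Nat.mul_le_mul_left _ (by omega)
      omega
  calc (quotients M).card
      ≤ ((Finset.Icc 1 s).image (M / ·)).card + (Finset.range (s + 1)).card :=
        (Finset.card_le_card hsub).trans (Finset.card_union_le _ _)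
    _ ≤ s + (s + 1) := by
        gcongr
        · exact Finset.card_image_le.trans (by simp)
        · simp
    _ = 2 * s + 1 := by ring

theorem sqrt_add_one_le_card_quotients (M : ℕ) : Nat.sqrt M + 1 ≤ (quotients M).card := by
  set s := Nat.sqrt M
  have hss : s * s ≤ M := Nat.sqrt_le M
  have hinj : Set.InjOn (M / ·) (Finset.Icc 1 s : Set ℕ) := by
    intro n hn m hm hnm
    simp only [Finset.coe_Icc, Set.mem_Icc] at hn hm
    by_contra hne
    rcases Nat.lt_or_gt_of_ne hne with h | h
    · exact (div_lt_div_of_lt_of_mul_le hn.1 h (by nlinarith)).ne' hnm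
    · exact (div_lt_div_of_lt_of_mul_le hm.1 h (by nlinarith)).ne hnm
  have hzero : 0 ∉ (Finset.Icc 1 s).image (M / ·) := by
    simp only [Finset.mem_image, Finset.mem_Icc, not_exists, not_and]
    intro n hn h
    exact (Nat.div_pos (by nlinarith) hn.1).ne' h
  have hsub : insert 0 ((Finset.Icc 1 s).image (M / ·)) ⊆ quotients M := by
    intro d hd
    rcases Finset.mem_insert.1 hd with rfl | hd
    · exact mem_quotients.2 ⟨0, Nat.div_zero M⟩
    · obtain ⟨n, -, rfl⟩ := Finset.mem_image.1 hd
      exact mem_quotients.2 ⟨n, rfl⟩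
  calc s + 1 = (insert 0 ((Finset.Icc 1 s).image (M / ·))).card := by
        rw [Finset.card_insert_of_notMem hzero, Finset.card_image_of_injOn hinj]
        simp
    _ ≤ (quotients M).card := Finset.card_le_card hsub

theorem card_quotients_sq_bounds (M : ℕ) :
    M + 1 ≤ (quotients M).card ^ 2 ∧ (quotients M).card ^ 2 ≤ 9 * (M + 1) := by
  have hlo := sqrt_add_one_le_card_quotients M
  have hhi := card_quotients_le M
  have hsq : Nat.sqrt M * Nat.sqrt M ≤ M := Nat.sqrt_le M
  have hsucc : M < (Nat.sqrt M + 1) * (Nat.sqrt M + 1) := Nat.lt_succ_sqrt M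
  constructor
  · nlinarith
  · have := Nat.mul_le_mul hhi hhi
    have := Nat.le_mul_self (Nat.sqrt M)
    nlinarith

end Quotients

section ReciprocalPrefixes

/-- `(2 ^ k - 1) / n` is the number formed by the first `k` binary digits of `1 / n` in its
non-terminating expansion (and `0` for `n = 0`). -/
def reciprocalPrefixes (k : ℕ) : Finset ℕ := quotients (2 ^ k - 1)

theorem two_pow_succ_sub_one (k : ℕ) : 2 ^ (k + 1) - 1 = 2 * (2 ^ k - 1) + 1 := by
  have := Nat.one_le_two_pow (n := k)
  rw [pow_succ]
  omega

theorem two_pow_succ_sub_one_div_div_two (k n : ℕ) :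
    (2 ^ (k + 1) - 1) / n / 2 = (2 ^ k - 1) / n := by
  rw [two_pow_succ_sub_one, two_mul_add_one_div_div_two]

theorem isPrunedBinaryTree_reciprocalPrefixes : IsPrunedBinaryTree reciprocalPrefixes where
  zero := by decide
  div_two_mem {k d} hd := by
    obtain ⟨n, rfl⟩ := mem_quotients.1 hd
    exact mem_quotients.2 ⟨n, (two_pow_succ_sub_one_div_div_two k n).symm⟩
  exists_child {k c} hc := by
    obtain ⟨n, rfl⟩ := mem_quotients.1 hc
    have hdiv := two_pow_succ_sub_one_div_div_two k n
    have hmem : (2 ^ (k + 1) - 1) / n ∈ reciprocalPrefixes (k + 1) := mem_quotients.2 ⟨n, rfl⟩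
    rcases Nat.mod_two_eq_zero_or_one ((2 ^ (k + 1) - 1) / n) with h | h
    · left; convert hmem using 1; omega
    · right; convert hmem using 1; omega

/-- The sets `{n | (2 ^ k - 1) / n = c k}` decrease in `k` and are finite once `c k ≠ 0`, so
they have a common element. -/
theorem exists_forall_eq_div_of_nested {c : ℕ → ℕ}
    (hmem : ∀ k, c k ∈ reciprocalPrefixes k) (hc : ∀ k, c (k + 1) / 2 = c k) : ∃ n, ∀ k, c k = (2 ^ k - 1) / n := by
  by_cases hzero : ∀ k, c k = 0
  · exact ⟨0, fun k => by simp [hzero k]⟩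
  obtain ⟨K, hK⟩ := not_forall.1 hzero
  set G : ℕ → Set ℕ := fun k => {n | (2 ^ k - 1) / n = c k}
  have hG : Antitone G := antitone_nat_of_succ_le fun k n (hn : _ = _) => by
    change _ = _
    rw [← two_pow_succ_sub_one_div_div_two, hn, hc]
  have hfin : (G K).Finite := (Set.finite_Iic (2 ^ K - 1)).subset fun n (hn : _ = _) => by
    by_contra hlt
    exact hK (hn ▸ Nat.div_eq_of_lt (not_le.1 hlt))
  obtain ⟨n, hn⟩ := IsCompact.nonempty_iInter_of_sequence_nonempty_isCompact_isClosed
    (fun j => G (K + j)) (fun j => hG (by omega))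
    (fun j => mem_quotients.1 (hmem (K + j))) hfin.isCompact (fun _ => isClosed_discrete _)
  exact ⟨n, fun k => (hG (Nat.le_add_left k K) (Set.mem_iInter.1 hn k)).symm⟩

theorem tendsto_two_pow_sub_one_div_div_two_pow (n : ℕ) :
    Tendsto (fun k : ℕ => (((2 ^ k - 1) / n : ℕ) : ℝ) / 2 ^ k) atTop (𝓝 (1 / n)) := by
  rcases Nat.eq_zero_or_pos n with rfl | hn
  · simp
  have hn' : (1 : ℝ) ≤ n := by exact_mod_cast hn
  have hbounds k : 1 / (n : ℝ) - 2 / 2 ^ k ≤ (((2 ^ k - 1) / n : ℕ) : ℝ) / 2 ^ k ∧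
      (((2 ^ k - 1) / n : ℕ) : ℝ) / 2 ^ k ≤ 1 / n := by
    set q := (2 ^ k - 1) / n
    have hlo : 2 ^ k - 1 < q * n + n := Nat.lt_div_mul_add hn
    have hhi : q * n ≤ 2 ^ k - 1 := Nat.div_mul_le_self _ _
    have h1 := Nat.one_le_two_pow (n := k)
    have hlo' : (2 : ℝ) ^ k ≤ q * n + n := by exact_mod_cast (by omega : 2 ^ k ≤ q * n + n)
    have hhi' : (q : ℝ) * n ≤ 2 ^ k := by exact_mod_cast (by omega : q * n ≤ 2 ^ k)
    have h2k : (0 : ℝ) < 2 ^ k := by positivity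
    constructor
    · have : 1 / (n : ℝ) - 2 / 2 ^ k = (2 ^ k - 2 * n) / (n * 2 ^ k) := by field_simp
      rw [this, div_le_div_iff₀ (by positivity) h2k]
      nlinarith
    · rw [div_le_div_iff₀ h2k (by positivity)]
      linarith
  refine tendsto_of_tendsto_of_tendsto_of_le_of_le ?_ tendsto_const_nhds
    (fun k => (hbounds k).1) (fun k => (hbounds k).2)
  simpa using tendsto_const_nhds.sub
    (tendsto_const_nhds.div_atTop (tendsto_pow_atTop_atTop_of_one_lt (one_lt_two (α := ℝ))))

end ReciprocalPrefixes

section Pressure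

theorem tendsto_log_div_of_le_of_le {u : ℕ → ℝ} {r c₁ c₂ : ℝ} (hr : 0 < r)
    (hc₁ : 0 < c₁) (hlo : ∀ k, c₁ * r ^ k ≤ u k) (hhi : ∀ k, u k ≤ c₂ * r ^ k) :
    Tendsto (fun k : ℕ => Real.log (u k) / k) atTop (𝓝 (Real.log r)) := by
  have hc₂ : 0 < c₂ := by
    have h0 := (hlo 0).trans (hhi 0)
    rw [pow_zero, mul_one, mul_one] at h0
    exact hc₁.trans_le h0
  have hu k : 0 < u k := (mul_pos hc₁ (pow_pos hr k)).trans_le (hlo k)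
  have hlim {c : ℝ} (hc : 0 < c) :
      Tendsto (fun k : ℕ => Real.log (c * r ^ k) / k) atTop (𝓝 (Real.log r)) := by
    have h := (tendsto_const_div_atTop_nhds_zero_nat (Real.log c)).add_const (Real.log r)
    rw [zero_add] at h
    refine h.congr' ((eventually_ne_atTop 0).mono fun k hk => ?_)
    dsimp only
    rw [Real.log_mul hc.ne' (pow_pos hr k).ne', Real.log_pow]
    field_simp
  refine tendsto_of_tendsto_of_tendsto_of_le_of_le (hlim hc₁) (hlim hc₂) (fun k => ?_)
    (fun k => ?_)
  · exact div_le_div_of_nonneg_right (Real.log_le_log (by positivity) (hlo k)) k.cast_nonneg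
  · exact div_le_div_of_nonneg_right (Real.log_le_log (hu k) (hhi k)) k.cast_nonneg

theorem tendsto_log_card_reciprocalPrefixes :
    Tendsto (fun k : ℕ => Real.log (reciprocalPrefixes k).card / k) atTop
      (𝓝 (Real.log 2 / 2)) := by
  have hbounds k := card_quotients_sq_bounds (2 ^ k - 1)
  have hpow k : 2 ^ k - 1 + 1 = 2 ^ k := Nat.sub_add_cancel Nat.one_le_two_pow
  have h := tendsto_log_div_of_le_of_le (u := fun k => ((reciprocalPrefixes k).card : ℝ) ^ 2)
    (r := 2) (c₁ := 1) (c₂ := 9) two_pos one_pos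
    (fun k => by
      rw [one_mul]; exact_mod_cast (hpow k).symm.trans_le (hbounds k).1)
    (fun k => by exact_mod_cast (hbounds k).2.trans_eq (by rw [hpow k]))
  refine (h.div_const 2).congr fun k => ?_
  simp only [Real.log_pow]
  ring

variable {D : ℕ → Finset ℕ}

theorem IsPrunedBinaryTree.S1_codeTree (hD : IsPrunedBinaryTree D) (k : ℕ) (α : ℝ) :
    S1 branching (fun _ _ => (1 : ℝ) / 2) (codeTree D) k α =
      (D k).card * ((1 / 2 : ℝ) ^ k) ^ α := by
  have hPhi (w : {w : List ℕ // w.length = k ∧ IsNode branching (codeTree D) w}) :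
      Phi1 (prodc (fun _ _ => (1 : ℝ) / 2) (codeTree D) w.1) α = ((1 / 2 : ℝ) ^ k) ^ α := by
    rw [Phi1, prodc_const_half, w.2.1, abs_of_pos (by positivity)]
  rw [S1, tsum_congr hPhi, tsum_const, Nat.card_congr (hD.nodeEquiv k), nsmul_eq_mul]
  simp

theorem tendsto_log_S1_codeTree_reciprocalPrefixes (α : ℝ) :
    Tendsto (fun k : ℕ => Real.log (S1 branching (fun _ _ => (1 : ℝ) / 2)
      (codeTree reciprocalPrefixes) k α) / k) atTop
      (𝓝 (Real.log 2 / 2 - α * Real.log 2)) := by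
  refine (tendsto_log_card_reciprocalPrefixes.sub_const (α * Real.log 2)).congr'
    ((eventually_ne_atTop 0).mono fun k hk => ?_)
  have hcard : ((reciprocalPrefixes k).card : ℝ) ≠ 0 :=
    Nat.cast_ne_zero.2 (Finset.card_ne_zero.2 ⟨0, mem_quotients.2 ⟨0, Nat.div_zero _⟩⟩)
  dsimp only
  rw [isPrunedBinaryTree_reciprocalPrefixes.S1_codeTree, Real.log_mul hcard (by positivity), Real.log_rpow (by positivity), Real.log_pow, one_div, Real.log_inv]
  field_simp
  ring

end Pressure

section Attractor

theorem hasSum_half_pow_mul_digit {v b : ℕ → ℕ} (hv0 : v 0 = 0)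
    (hv : ∀ k, v (k + 1) = 2 * v k + b k) {x : ℝ}
    (hx : Tendsto (fun k => (v k : ℝ) / 2 ^ k) atTop (𝓝 x)) :
    HasSum (fun k => (1 / 2 : ℝ) ^ k * (b k / 2)) x := by
  have hpartial k : ∑ j ∈ Finset.range k, (1 / 2 : ℝ) ^ j * (b j / 2) = v k / 2 ^ k := by
    induction k with
    | zero => simp [hv0]
    | succ k ih =>
      rw [Finset.sum_range_succ, ih, hv, one_div_pow, pow_succ]
      push_cast
      field_simp
  rw [hasSum_iff_tendsto_nat_of_nonneg (fun k => by positivity)]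
  simpa only [hpartial] using hx

theorem vecCons_zero_half_apply (b : Fin 2) : (![0, 1 / 2] : Fin 2 → ℝ) b = (b : ℕ) / 2 := by
  fin_cases b <;> simp

variable {D : ℕ → Finset ℕ}

theorem Z1_codeTree_eq {i : ℕ → ℕ} {x : ℝ}
    (hx : Tendsto (fun k => (value D (word i k) : ℝ) / 2 ^ k) atTop (𝓝 x)) :
    Z1 (fun _ _ => 1 / 2) (fun t l => (![0, 1 / 2] : Fin 2 → ℝ) (digit t l)) (codeTree D) i
      = x := by
  have hsum := hasSum_half_pow_mul_digit (v := fun k => value D (word i k)) rfl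
    (fun k => by rw [word_succ, value_append]) hx
  rw [Z1, ← hsum.tsum_eq]
  congr 1 with k
  rw [prodc_const_half, length_word, vecCons_zero_half_apply]

/-- The path through the binary digits of `1 / n` (the zero path for `n = 0`). -/
def reciprocalPath (n : ℕ) : ℕ → ℕ := pathOf reciprocalPrefixes fun k => (2 ^ k - 1) / n

theorem div_mem_reciprocalPrefixes (n k : ℕ) : (2 ^ k - 1) / n ∈ reciprocalPrefixes k :=
  mem_quotients.2 ⟨n, rfl⟩

theorem isPath_reciprocalPath (n : ℕ) :
    IsPath branching (codeTree reciprocalPrefixes) (reciprocalPath n) :=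
  isPrunedBinaryTree_reciprocalPrefixes.isPath_pathOf (div_mem_reciprocalPrefixes n)
    (two_pow_succ_sub_one_div_div_two · n)

theorem IsPath.exists_eq_reciprocalPath {i : ℕ → ℕ}
    (hi : IsPath branching (codeTree reciprocalPrefixes) i) : ∃ n, i = reciprocalPath n := by
  obtain ⟨n, hn⟩ := exists_forall_eq_div_of_nested
    (fun k => by simpa [length_word] using
      isPrunedBinaryTree_reciprocalPrefixes.value_mem (hi.isNode_word k))
    (fun k => by rw [word_succ, value_append_div_two])
  refine ⟨n, ?_⟩
  rw [← hi.pathOf_value_word, reciprocalPath]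
  simp only [hn]

theorem attractor1_codeTree_reciprocalPrefixes (r tr : Fin 3 → ℕ → ℝ) :
    attractor1 branching r tr (codeTree reciprocalPrefixes) =
      range fun n => Z1 r tr (codeTree reciprocalPrefixes) (reciprocalPath n) := by
  ext x
  constructor
  · rintro ⟨i, hi, rfl⟩
    obtain ⟨n, rfl⟩ := hi.exists_eq_reciprocalPath
    exact ⟨n, rfl⟩
  · rintro ⟨n, rfl⟩
    exact ⟨reciprocalPath n, isPath_reciprocalPath n, rfl⟩

theorem range_one_div_natCast :
    range (fun n : ℕ => 1 / (n : ℝ)) =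
      {0} ∪ {x : ℝ | ∃ n : ℕ, 0 < n ∧ x = 1 / (n : ℝ)} := by
  ext x
  constructor
  · rintro ⟨n, rfl⟩
    rcases Nat.eq_zero_or_pos n with rfl | hn
    · simp
    · exact Or.inr ⟨n, hn, rfl⟩
  · rintro (rfl | ⟨n, -, rfl⟩)
    · exact ⟨0, by simp⟩
    · exact ⟨n, rfl⟩

theorem attractor1_codeTree_reciprocalPrefixes_half :
    attractor1 branching (fun _ _ => 1 / 2)
        (fun t l => (![0, 1 / 2] : Fin 2 → ℝ) (digit t l)) (codeTree reciprocalPrefixes) =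
      {0} ∪ {x : ℝ | ∃ n : ℕ, 0 < n ∧ x = 1 / (n : ℝ)} := by
  rw [attractor1_codeTree_reciprocalPrefixes, ← range_one_div_natCast]
  congr 1 with n
  refine Z1_codeTree_eq ?_
  simp only [isPrunedBinaryTree_reciprocalPrefixes.value_word_pathOf (div_mem_reciprocalPrefixes n)
    (two_pow_succ_sub_one_div_div_two · n), reciprocalPath]
  exact tendsto_two_pow_sub_one_div_div_two_pow n

end Attractor

section PackingDimension

theorem covNum_empty (ε : ℝ) : covNum ∅ ε = 0 :=
  nonpos_iff_eq_zero.1 ((iInf₂_le ∅ (by simp)).trans_eq (by simp))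

theorem one_le_covNum {A : Set ℝ} (hA : A.Nonempty) (ε : ℝ) : 1 ≤ covNum A ε := by
  obtain ⟨x, hx⟩ := hA
  refine le_iInf₂ fun s hs => ?_
  obtain ⟨c, hc, -⟩ := Set.mem_iUnion₂.1 (hs hx)
  exact_mod_cast Finset.card_pos.2 ⟨c, hc⟩

theorem covNum_singleton (x : ℝ) {ε : ℝ} (hε : 0 ≤ ε) : covNum {x} ε = 1 := by
  refine le_antisymm ?_ (one_le_covNum (Set.singleton_nonempty x) ε)
  calc covNum {x} ε ≤ (({x} : Finset ℝ).card : ℝ≥0∞) :=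
        iInf₂_le _ (by simpa using Metric.mem_closedBall_self (x := x) hε)
    _ = 1 := by simp

theorem uboxDim_nonneg (A : Set ℝ) : 0 ≤ uboxDim A := by
  have hlog ε : 0 ≤ Real.log (covNum A ε).toReal := by
    rcases A.eq_empty_or_nonempty with rfl | hA
    · simp [covNum_empty]
    · rcases eq_or_ne (covNum A ε) ⊤ with htop | htop
      · simp [htop]
      · exact Real.log_nonneg (by simpa using ENNReal.toReal_mono htop (one_le_covNum hA ε))
  have hpos :
      ∀ᶠ ε in 𝓝[>] (0 : ℝ), 0 ≤ Real.log (covNum A ε).toReal / -Real.log ε := by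
    filter_upwards [Ioo_mem_nhdsGT (zero_lt_one' ℝ)] with ε hε
    exact div_nonneg (hlog ε) (neg_nonneg.2 (Real.log_nonpos hε.1.le hε.2.le))
  rw [uboxDim, limsup_eq]
  refine Real.sInf_nonneg fun a (ha : ∀ᶠ ε in 𝓝[>] (0 : ℝ), _ ≤ a) => ?_
  obtain ⟨ε, h0, ha⟩ := (hpos.and ha).exists
  exact h0.trans ha

theorem uboxDim_singleton (x : ℝ) : uboxDim {x} = 0 := by
  rw [uboxDim, limsup_congr (v := fun _ => (0 : ℝ)) ?_, limsup_const]
  filter_upwards [self_mem_nhdsWithin] with ε (hε : 0 < ε)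
  simp [covNum_singleton x hε.le]

theorem packingDim_of_countable {A : Set ℝ} (hA : A.Countable) : packingDim A = 0 := by
  obtain ⟨f, hf⟩ := Set.countable_iff_exists_subset_range.1 hA
  refine IsLeast.csInf_eq ⟨⟨fun n => {f n}, fun _ => Bornology.isBounded_singleton, ?_,
    fun n => (uboxDim_singleton (f n)).le⟩, ?_⟩
  · rwa [Set.iUnion_singleton_eq_range]
  · rintro s ⟨Es, -, -, hEs⟩
    exact (uboxDim_nonneg (Es 0)).trans (hEs 0)

end PackingDimension

/-- Example `pressure3`: with `f₀ = x/2`, `f₁ = x/2 + 1/2`,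
`F¹ = {f₀, f₁}` (label `0`), `F² = {f₀}` (label `1`), `F³ = {f₁}` (label `2`), the
translations identified so that the data is `a ∈ ℝ²`, there is a code tree `ω` whose
attractor at the original parameter `a = (0, 1/2)` is `{0} ∪ {1/n : n ∈ ℕ}`, whose
pressure exists for all `α ≥ 0` with unique zero `1/2`, while for every `a ∈ ℝ²` the
attractor is countable, so its Hausdorff and packing dimensions vanish. -/
theorem statement7 :
    ∃ ω : List ℕ → Fin 3,
      (attractor1 (fun l : Fin 3 => if l = 0 then 2 else 1) (fun _ _ => (1 : ℝ) / 2)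
          (fun l i =>
            (![0, 1 / 2] : Fin 2 → ℝ)
              (if l = 0 then (if i = 0 then 0 else 1) else if l = 1 then 0 else 1)) ω)
        = {0} ∪ {x : ℝ | ∃ n : ℕ, 0 < n ∧ x = 1 / (n : ℝ)} ∧
      (∃ press : ℝ → ℝ,
        (∀ α : ℝ, 0 ≤ α →
          Tendsto
            (fun k : ℕ =>
              Real.log (S1 (fun l : Fin 3 => if l = 0 then 2 else 1)
                (fun _ _ => (1 : ℝ) / 2) ω k α) / k)
            atTop (nhds (press α))) ∧
        press (1 / 2) = 0 ∧ ∀ α : ℝ, 0 ≤ α → press α = 0 → α = 1 / 2) ∧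
      ∀ a : Fin 2 → ℝ,
        (attractor1 (fun l : Fin 3 => if l = 0 then 2 else 1) (fun _ _ => (1 : ℝ) / 2)
            (fun l i =>
              a (if l = 0 then (if i = 0 then 0 else 1) else if l = 1 then 0 else 1))
            ω).Countable ∧
        dimH (attractor1 (fun l : Fin 3 => if l = 0 then 2 else 1)
            (fun _ _ => (1 : ℝ) / 2)
            (fun l i =>
              a (if l = 0 then (if i = 0 then 0 else 1) else if l = 1 then 0 else 1))
            ω) = 0 ∧
        packingDim (attractor1 (fun l : Fin 3 => if l = 0 then 2 else 1)
            (fun _ _ => (1 : ℝ) / 2)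
            (fun l i =>
              a (if l = 0 then (if i = 0 then 0 else 1) else if l = 1 then 0 else 1))
            ω) = 0 := by
  have hlog2 : 0 < Real.log 2 := Real.log_pos one_lt_two
  refine ⟨codeTree reciprocalPrefixes, attractor1_codeTree_reciprocalPrefixes_half,
    ⟨fun α => Real.log 2 / 2 - α * Real.log 2,
      fun α _ => tendsto_log_S1_codeTree_reciprocalPrefixes α, by ring,
      fun α _ h => by nlinarith⟩, fun a => ?_⟩
  have hA : (attractor1 branching (fun _ _ => 1 / 2) (fun t l => a (digit t l))
      (codeTree reciprocalPrefixes)).Countable := by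
    rw [attractor1_codeTree_reciprocalPrefixes]
    exact countable_range _
  exact ⟨hA, dimH_countable hA, packingDim_of_countable hA⟩

end CodeTreeFractal
end
end

section
/- Let T and U be non-singular linear maps on ℝ² with σ_1(U) > σ_2(U). Let v₁(T), v₂(T) be orthonormal unit vectors with |T(v_i)| = σ_i(T) (any orthonormal pair if σ_1(T) = σ_2(T)), let w₁(U) = U(v₁(U)) where |U(v₁(U))| = σ_1(U), and write ŵ₁(U) = w₁(U)/|w₁(U)| = a v₁(T) + b v₂(T). Then for every 0 ≤ α ≤ 2, Φ^α(TU) ≥ |a|^α Φ^α(T) Φ^α(U). -/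
/-! Since `v₁(T)` maximises `‖T v‖` on the unit sphere, `T` maps the orthogonal pair
`v₁(T) ⊥ v₂(T)` to an orthogonal pair, so by Pythagoras `‖T ŵ₁(U)‖ ≥ |a| σ₁(T)`. Evaluating `TU`
at `v₁(U)` gives `σ₁(TU) ≥ |a| σ₁(T) σ₁(U)`, while `σ₂(TU) ≥ σ₂(T) σ₂(U)` holds for any maps.
Combining these with `|a| ≤ 1` (so `|a|^α ≤ |a|` when `α ≥ 1`) gives the bound for `Φ^α`. -/

open scoped ENNReal Topology

noncomputable section

namespace CodeTreeFractal

/-- The first (largest) singular value of a linear map on `ℝ²`: the operator norm. -/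
def sv1 (T : EuclideanSpace ℝ (Fin 2) →L[ℝ] EuclideanSpace ℝ (Fin 2)) : ℝ := ‖T‖

/-- The second (smallest) singular value of a linear map on `ℝ²`: the minimum of
`‖T v‖` over unit vectors `v`. -/
def sv2 (T : EuclideanSpace ℝ (Fin 2) →L[ℝ] EuclideanSpace ℝ (Fin 2)) : ℝ :=
  sInf {s : ℝ | ∃ v : EuclideanSpace ℝ (Fin 2), ‖v‖ = 1 ∧ s = ‖T v‖}

/-- The singular value function `Φ^α` on `ℝ²`, for `0 ≤ α ≤ 2`. -/
def Phi2 (T : EuclideanSpace ℝ (Fin 2) →L[ℝ] EuclideanSpace ℝ (Fin 2)) (α : ℝ) : ℝ :=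
  if α ≤ 1 then sv1 T ^ α else sv1 T * sv2 T ^ (α - 1)

/-- The lower singular value function `Φ̲^α` on `ℝ²`, for `0 ≤ α ≤ 2`. -/
def PhiLow2 (T : EuclideanSpace ℝ (Fin 2) →L[ℝ] EuclideanSpace ℝ (Fin 2)) (α : ℝ) : ℝ :=
  if α ≤ 1 then sv2 T ^ α else sv2 T * sv1 T ^ (α - 1)

section InnerProductSpace

variable {E F : Type*} [NormedAddCommGroup E] [InnerProductSpace ℝ E]
  [NormedAddCommGroup F] [InnerProductSpace ℝ F]

theorem norm_le_norm_add_of_inner_eq_zero {x y : E} (h : inner ℝ x y = 0) : ‖x‖ ≤ ‖x + y‖ :=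
  (mul_self_le_mul_self_iff (norm_nonneg _) (norm_nonneg _)).2 <| by
    rw [norm_add_sq_eq_norm_sq_add_norm_sq_real h]
    exact le_add_of_nonneg_right (mul_self_nonneg _)

theorem abs_mul_norm_le_norm_smul_add_smul {x y : E} (h : inner ℝ x y = 0) (a b : ℝ) :
    |a| * ‖x‖ ≤ ‖a • x + b • y‖ := by
  simpa only [norm_smul, Real.norm_eq_abs] using
    norm_le_norm_add_of_inner_eq_zero (x := a • x) (y := b • y)
      (by rw [inner_smul_left, inner_smul_right, h, mul_zero, mul_zero])

theorem norm_inv_norm_smul_le_one (x : E) : ‖‖x‖⁻¹ • x‖ ≤ 1 := by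
  rcases eq_or_ne x 0 with rfl | hx
  · simp
  · exact (norm_smul_inv_norm hx).le

/-- Expanding `‖T (v + t • w)‖² ≤ ‖T‖² ‖v + t • w‖²` gives `0 ≤ K t² - 2 ⟪T v, T w⟫ t` for all
`t`; a quadratic without constant term is nonnegative only if its linear coefficient vanishes. -/
theorem inner_apply_eq_zero_of_norm_apply_eq (T : E →L[ℝ] F) {v w : E}
    (hTv : ‖T v‖ = ‖T‖ * ‖v‖) (hvw : inner ℝ v w = 0) : inner ℝ (T v) (T w) = 0 := by
  have hquad : ∀ t : ℝ, 0 ≤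
      (‖T‖ ^ 2 * ‖w‖ ^ 2 - ‖T w‖ ^ 2) * (t * t) + (-2 * inner ℝ (T v) (T w)) * t + 0 := by
    intro t
    have hle := pow_le_pow_left₀ (norm_nonneg _) (T.le_opNorm (v + t • w)) 2
    rw [map_add, map_smul, mul_pow, norm_add_sq_real, norm_add_sq_real, inner_smul_right,
      inner_smul_right, hvw, norm_smul, norm_smul, hTv, Real.norm_eq_abs, mul_pow, mul_pow,
      mul_pow, sq_abs] at hle
    linarith
  have hdisc := discrim_le_zero hquad
  rw [discrim] at hdisc
  nlinarith [sq_nonneg (inner ℝ (T v) (T w))]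

end InnerProductSpace

local notation "ℝ²" => EuclideanSpace ℝ (Fin 2)

section SingularValues

variable (T U : ℝ² →L[ℝ] ℝ²)

theorem sv1_nonneg : 0 ≤ sv1 T := norm_nonneg T

theorem sv2_le_norm_apply {v : ℝ²} (hv : ‖v‖ = 1) : sv2 T ≤ ‖T v‖ :=
  csInf_le ⟨0, by rintro s ⟨v, -, rfl⟩; exact norm_nonneg _⟩ ⟨v, hv, rfl⟩

theorem sv2_nonneg : 0 ≤ sv2 T :=
  le_csInf ⟨_, EuclideanSpace.single 0 1, by simp, rfl⟩
    (by rintro s ⟨v, -, rfl⟩; exact norm_nonneg _)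

theorem sv2_mul_norm_le_norm_apply (x : ℝ²) : sv2 T * ‖x‖ ≤ ‖T x‖ := by
  rcases eq_or_ne x 0 with rfl | hx
  · simp
  · have hunit : ‖‖x‖⁻¹ • x‖ = 1 := by
      rw [norm_smul, norm_inv, norm_norm, inv_mul_cancel₀ (norm_ne_zero_iff.2 hx)]
    have h := sv2_le_norm_apply T hunit
    rwa [map_smul, norm_smul, norm_inv, norm_norm, le_inv_mul_iff₀ (norm_pos_iff.2 hx),
      mul_comm] at h

theorem sv2_mul_sv2_le_sv2_comp : sv2 T * sv2 U ≤ sv2 (T.comp U) := by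
  refine le_csInf ⟨_, EuclideanSpace.single 0 1, by simp, rfl⟩ ?_
  rintro s ⟨v, hv, rfl⟩
  calc sv2 T * sv2 U ≤ sv2 T * ‖U v‖ := by
        gcongr
        · exact sv2_nonneg T
        · exact sv2_le_norm_apply U hv
    _ ≤ ‖T (U v)‖ := sv2_mul_norm_le_norm_apply T (U v)

variable {T U} {v w u : ℝ²} {a b : ℝ}

theorem abs_mul_sv1_le_norm_apply (hv : ‖v‖ = 1) (hvw : inner ℝ v w = 0)
    (hTv : ‖T v‖ = sv1 T) : |a| * sv1 T ≤ ‖T (a • v + b • w)‖ := by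
  have horth : inner ℝ (T v) (T w) = 0 :=
    inner_apply_eq_zero_of_norm_apply_eq T (by rw [hTv, hv, mul_one, sv1]) hvw
  rw [map_add, map_smul, map_smul, ← hTv]
  exact abs_mul_norm_le_norm_smul_add_smul horth a b

theorem abs_mul_sv1_mul_sv1_le_sv1_comp (hv : ‖v‖ = 1) (hvw : inner ℝ v w = 0)
    (hTv : ‖T v‖ = sv1 T) (hu : ‖u‖ = 1) (hUu : ‖U u‖ = sv1 U)
    (hdecomp : ‖U u‖⁻¹ • U u = a • v + b • w) :
    |a| * sv1 T * sv1 U ≤ sv1 (T.comp U) := by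
  have hTUu : ‖T (U u)‖ = ‖U u‖ * ‖T (‖U u‖⁻¹ • U u)‖ := by
    rcases eq_or_ne (U u) 0 with h | h
    · simp [h]
    · rw [map_smul, norm_smul, norm_inv, norm_norm, mul_inv_cancel_left₀ (norm_ne_zero_iff.2 h)]
  calc |a| * sv1 T * sv1 U = sv1 U * (|a| * sv1 T) := by ring
    _ ≤ ‖U u‖ * ‖T (‖U u‖⁻¹ • U u)‖ := by
        rw [hdecomp, hUu]
        gcongr
        · exact sv1_nonneg U
        · exact abs_mul_sv1_le_norm_apply hv hvw hTv
    _ = ‖(T.comp U) u‖ := hTUu.symm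
    _ ≤ sv1 (T.comp U) := (T.comp U).unit_le_opNorm u hu.le

end SingularValues

theorem rpow_mul_Phi2_mul_Phi2_le_Phi2 {S T U : ℝ² →L[ℝ] ℝ²} {c α : ℝ} (hc0 : 0 ≤ c)
    (hc1 : c ≤ 1) (hα : 0 ≤ α) (h1 : c * sv1 T * sv1 U ≤ sv1 S)
    (h2 : sv2 T * sv2 U ≤ sv2 S) : c ^ α * (Phi2 T α * Phi2 U α) ≤ Phi2 S α := by
  have hT₁ := sv1_nonneg T
  have hU₁ := sv1_nonneg U
  have hT₂ := sv2_nonneg T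
  have hU₂ := sv2_nonneg U
  unfold Phi2
  split_ifs with hα1
  · calc c ^ α * (sv1 T ^ α * sv1 U ^ α) = (c * sv1 T * sv1 U) ^ α := by
          rw [Real.mul_rpow (by positivity) hU₁, Real.mul_rpow hc0 hT₁, mul_assoc]
      _ ≤ sv1 S ^ α := by gcongr
  · have hα_one : 1 ≤ α := (not_le.1 hα1).le
    calc c ^ α * (sv1 T * sv2 T ^ (α - 1) * (sv1 U * sv2 U ^ (α - 1)))
        = c ^ α * sv1 T * sv1 U * (sv2 T * sv2 U) ^ (α - 1) := by
          rw [Real.mul_rpow hT₂ hU₂]; ring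
      _ ≤ c * sv1 T * sv1 U * (sv2 T * sv2 U) ^ (α - 1) := by
          gcongr; exact Real.rpow_le_self_of_le_one hc0 hc1 hα_one
      _ ≤ sv1 S * sv2 S ^ (α - 1) := by
          gcongr
          exact sv1_nonneg S

theorem statement18_general
    (T U : EuclideanSpace ℝ (Fin 2) →L[ℝ] EuclideanSpace ℝ (Fin 2))
    (v1T v2T v1U : EuclideanSpace ℝ (Fin 2))
    (hv1T : ‖v1T‖ = 1)
    (horth : (inner ℝ v1T v2T : ℝ) = 0)
    (hTv1 : ‖T v1T‖ = sv1 T)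
    (hv1U : ‖v1U‖ = 1) (hUv1 : ‖U v1U‖ = sv1 U)
    (a b : ℝ)
    (hdecomp : (‖U v1U‖)⁻¹ • (U v1U) = a • v1T + b • v2T)
    (α : ℝ) (hα0 : 0 ≤ α) :
    |a| ^ α * (Phi2 T α * Phi2 U α) ≤ Phi2 (T.comp U) α := by
  have ha : |a| ≤ 1 := by
    have h := abs_mul_norm_le_norm_smul_add_smul horth a b
    rw [hv1T, mul_one, ← hdecomp] at h
    exact h.trans (norm_inv_norm_smul_le_one _)
  exact rpow_mul_Phi2_mul_Phi2_le_Phi2 (abs_nonneg a) ha hα0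
    (abs_mul_sv1_mul_sv1_le_sv1_comp hv1T horth hTv1 hv1U hUv1 hdecomp)
    (sv2_mul_sv2_le_sv2_comp T U)

/-- inequality \eqref{phibound}: if `ŵ₁(U) = a v₁(T) + b v₂(T)`, then
`Φ^α(TU) ≥ |a|^α Φ^α(T) Φ^α(U)` for `0 ≤ α ≤ 2`. -/
theorem statement18
    (T U : EuclideanSpace ℝ (Fin 2) →L[ℝ] EuclideanSpace ℝ (Fin 2))
    (hT : Function.Injective T) (hU : Function.Injective U)
    (hUdistinct : sv2 U < sv1 U)
    (v1T v2T v1U : EuclideanSpace ℝ (Fin 2))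
    (hv1T : ‖v1T‖ = 1) (hv2T : ‖v2T‖ = 1)
    (horth : (inner ℝ v1T v2T : ℝ) = 0)
    (hTv1 : ‖T v1T‖ = sv1 T) (hTv2 : ‖T v2T‖ = sv2 T)
    (hv1U : ‖v1U‖ = 1) (hUv1 : ‖U v1U‖ = sv1 U)
    (a b : ℝ)
    (hdecomp : (‖U v1U‖)⁻¹ • (U v1U) = a • v1T + b • v2T)
    (α : ℝ) (hα0 : 0 ≤ α) (hα2 : α ≤ 2) :
    |a| ^ α * (Phi2 T α * Phi2 U α) ≤ Phi2 (T.comp U) α :=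
  statement18_general T U v1T v2T v1U hv1T horth hTv1 hv1U hUv1 a b hdecomp α hα0

end CodeTreeFractal
end
end
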